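/- arXiv:1406.6656 — 3 statements merged into one kernel-verified Lean document; each statement's English description precedes it below -/
import Mathlib

section
/- Let a, b ∈ ℝ^d with aᵢ < bᵢ for each i, and let Ω = Πᵢ [aᵢ, bᵢ] be the corresponding closed box. Let u : ℝ^d → ℝ^d be continuous on Ω and differentiable on its interior with integrable divergence, let D be a measurable subset of the interior of Ω whose topological frontier has Lebesgue measure zero, and let C₁, C₂ ∈ ℝ be such that ∇·u(x) = C₁ for x ∈ D and ∇·u(x) = C₂ for x in the interior of Ω minus the closure of D. Then the outward flux of u through ∂Ω satisfies Σᵢ ( ∫_{face xᵢ = bᵢ} uᵢ dS − ∫_{face xᵢ = aᵢ} uᵢ dS ) = (C₁ − C₂)·vol(D) + C₂·vol(Ω). -/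
/-!
By the divergence theorem the flux equals `∫_Ω ∇·u`. Since `∂Ω` and `∂D` are null, `Ω` may be
replaced by its interior and the integral split into `∫_D C₁ = C₁ vol D` and
`∫_{int Ω \ D} C₂ = C₂ (vol Ω - vol D)`.
-/

open MeasureTheory Set

/-- The divergence `∇·u = Σᵢ ∂uᵢ/∂xᵢ` (trace of the Jacobian) of a vector field
`u : ℝ^d → ℝ^d`. -/
noncomputable def vectorDivergence {d : ℕ}
    (u : (Fin d → ℝ) → (Fin d → ℝ)) (x : Fin d → ℝ) : ℝ :=
  ∑ i, fderiv ℝ u x (Pi.single i 1) i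

theorem pi_Ioo_subset_interior_Icc {ι α : Type*} [Finite ι] [LinearOrder α] [TopologicalSpace α]
    [OrderClosedTopology α] (a b : ι → α) :
    (pi univ fun i => Ioo (a i) (b i)) ⊆ interior (Icc a b) :=
  interior_maximal (fun _ hx => ⟨fun i => (hx i trivial).1.le, fun i => (hx i trivial).2.le⟩)
    (isOpen_set_pi finite_univ fun _ _ => isOpen_Ioo)

theorem setIntegral_eq_of_eqOn_of_eqOn_diff_closure {X : Type*} [TopologicalSpace X]
    [MeasurableSpace X] {μ : Measure X} {I D : Set X} {f : X → ℝ} {C₁ C₂ : ℝ}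
    (hI : MeasurableSet I) (hμI : μ I ≠ ⊤) (hD : MeasurableSet D) (hDI : D ⊆ I)
    (hfrontier : μ (frontier D) = 0) (h₁ : EqOn f (fun _ => C₁) D)
    (h₂ : EqOn f (fun _ => C₂) (I \ closure D)) :
    ∫ x in I, f x ∂μ = (C₁ - C₂) * μ.real D + C₂ * μ.real I := by
  have hμD : μ D ≠ ⊤ := measure_ne_top_of_subset hDI hμI
  -- A point of `closure D \ D` lies on the frontier, since `interior D ⊆ D`.
  have h₂_ae : f =ᵐ[μ.restrict (I \ D)] fun _ => C₂ := by
    refine (ae_restrict_iff' (hI.diff hD)).2 ?_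
    filter_upwards [measure_eq_zero_iff_ae_notMem.1 hfrontier] with x hx hxID
    exact h₂ ⟨hxID.1, fun hxD => hx ⟨hxD, fun hxD' => hxID.2 (interior_subset hxD')⟩⟩
  have hint₁ : IntegrableOn f D μ :=
    (integrableOn_const hμD).congr_fun h₁.symm hD
  have hint₂ : IntegrableOn f (I \ D) μ :=
    (integrableOn_const (measure_ne_top_of_subset sdiff_subset hμI)).congr_fun_ae h₂_ae.symm
  calc ∫ x in I, f x ∂μ = (∫ x in D, f x ∂μ) + ∫ x in I \ D, f x ∂μ := by
        conv_lhs => rw [← union_sdiff_cancel hDI]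
        exact setIntegral_union disjoint_sdiff_right (hI.diff hD) hint₁ hint₂
    _ = C₁ * μ.real D + C₂ * (μ.real I - μ.real D) := by
        rw [setIntegral_congr_fun hD h₁, integral_congr_ae h₂_ae, setIntegral_const,
          setIntegral_const, measureReal_sdiff hDI hD hμI, smul_eq_mul, smul_eq_mul,
          mul_comm, mul_comm _ C₂]
    _ = (C₁ - C₂) * μ.real D + C₂ * μ.real I := by ring

theorem flux_through_box_boundary {n : ℕ} (a b : Fin (n + 1) → ℝ)
    (hab : ∀ i, a i < b i)
    (u : (Fin (n + 1) → ℝ) → (Fin (n + 1) → ℝ))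
    (hcont : ContinuousOn u (Set.Icc a b))
    (hdiff : ∀ x ∈ interior (Set.Icc a b), DifferentiableAt ℝ u x)
    (hint : IntegrableOn (vectorDivergence u) (Set.Icc a b) volume)
    (D : Set (Fin (n + 1) → ℝ)) (hDmeas : MeasurableSet D)
    (hDsub : D ⊆ interior (Set.Icc a b))
    (hfrontier : volume (frontier D) = 0)
    (C₁ C₂ : ℝ)
    (h₁ : ∀ x ∈ D, vectorDivergence u x = C₁)
    (h₂ : ∀ x ∈ interior (Set.Icc a b) \ closure D, vectorDivergence u x = C₂) :
    (∑ i : Fin (n + 1),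
        ((∫ x in Set.Icc (a ∘ i.succAbove) (b ∘ i.succAbove),
            u (i.insertNth (b i) x) i) -
         (∫ x in Set.Icc (a ∘ i.succAbove) (b ∘ i.succAbove),
            u (i.insertNth (a i) x) i))) =
      (C₁ - C₂) * (volume D).toReal + C₂ * (volume (Set.Icc a b)).toReal := by
  have hinterior_ae : interior (Icc a b) =ᵐ[volume] Icc a b :=
    interior_ae_eq_of_null_frontier ((convex_Icc a b).addHaar_frontier volume)
  have hdiv := integral_divergence_of_hasFDerivAt_off_countable a b (fun i => (hab i).le) u
    (fderiv ℝ u) ∅ countable_empty hcont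
    (fun x hx => (hdiff x (pi_Ioo_subset_interior_Icc a b hx.1)).hasFDerivAt) hint
  rw [← hdiv, ← setIntegral_congr_set hinterior_ae]
  change ∫ x in interior (Icc a b), vectorDivergence u x = _
  rw [setIntegral_eq_of_eqOn_of_eqOn_diff_closure isOpen_interior.measurableSet
    (measure_congr hinterior_ae ▸ isCompact_Icc.measure_lt_top.ne) hDmeas hDsub hfrontier h₁ h₂,
    measureReal_congr hinterior_ae]
  rfl
end

section
/- Let U ⊆ ℝ^d be open and connected, let φ : ℝ^d → ℝ be three times continuously differentiable on U, and let λ, μ ∈ ℝ. Suppose the matrix-valued field σ(x) = λ·Δφ(x)·I + 2μ·Hess φ(x) is divergence-free on U, i.e. Σⱼ ∂σᵢⱼ/∂xⱼ = 0 on U for each i. Then the function (λ+2μ)·Δφ is constant on U. -/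
/-! Row `i` of `div σ` is `λ ∂ᵢΔφ + 2μ Σⱼ ∂ⱼ∂ᵢ∂ⱼφ`, and by the symmetry of the second derivatives
of `∂ⱼφ` the last sum is `∂ᵢΔφ`. Hence `div σ = (λ + 2μ) ∇Δφ`, so `(λ + 2μ) Δφ` has vanishing
derivative on the connected open set `U` and is constant there. -/

/-- Partial derivative `∂f/∂xᵢ` of a scalar function on `ℝ^d`. -/
noncomputable def pderiv' {d : ℕ} (i : Fin d)
    (f : EuclideanSpace ℝ (Fin d) → ℝ) (x : EuclideanSpace ℝ (Fin d)) : ℝ :=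
  fderiv ℝ f x (EuclideanSpace.single i 1)

/-- The Laplacian `Δf = Σᵢ ∂²f/∂xᵢ²` of a scalar function on `ℝ^d`. -/
noncomputable def laplacian' {d : ℕ}
    (f : EuclideanSpace ℝ (Fin d) → ℝ) (x : EuclideanSpace ℝ (Fin d)) : ℝ :=
  ∑ i, pderiv' i (pderiv' i f) x

/-- The Hessian matrix `(Hess f)ᵢⱼ = ∂²f/∂xᵢ∂xⱼ` of a scalar function on `ℝ^d`. -/
noncomputable def hessian {d : ℕ}
    (f : EuclideanSpace ℝ (Fin d) → ℝ) (x : EuclideanSpace ℝ (Fin d)) :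
    Matrix (Fin d) (Fin d) ℝ :=
  fun i j => pderiv' i (pderiv' j f) x

/-- The stress field `σ = λ·(Δφ)·I + 2μ·Hess φ` associated to the displacement `∇φ`
by isotropic Hooke's law with Lamé modulus `λ` and shear modulus `μ`. -/
noncomputable def potentialStress {d : ℕ} (lam mu : ℝ)
    (φ : EuclideanSpace ℝ (Fin d) → ℝ) (x : EuclideanSpace ℝ (Fin d)) :
    Matrix (Fin d) (Fin d) ℝ :=
  (lam * laplacian' φ x) • (1 : Matrix (Fin d) (Fin d) ℝ) + (2 * mu) • hessian φ x

open Finset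

section

variable {d : ℕ} {f g : EuclideanSpace ℝ (Fin d) → ℝ} {x : EuclideanSpace ℝ (Fin d)}

lemma pderiv'_add (hf : DifferentiableAt ℝ f x) (hg : DifferentiableAt ℝ g x) (i : Fin d) :
    pderiv' i (fun y => f y + g y) x = pderiv' i f x + pderiv' i g x := by
  simp only [pderiv', fderiv_fun_add hf hg, add_apply]

lemma pderiv'_const_mul (hf : DifferentiableAt ℝ f x) (c : ℝ) (i : Fin d) :
    pderiv' i (fun y => c * f y) x = c * pderiv' i f x := by
  simp only [pderiv', fderiv_const_mul hf, smul_apply, smul_eq_mul]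

lemma pderiv'_sum {ι : Type*} {s : Finset ι} {F : ι → EuclideanSpace ℝ (Fin d) → ℝ}
    (hF : ∀ k ∈ s, DifferentiableAt ℝ (F k) x) (i : Fin d) :
    pderiv' i (fun y => ∑ k ∈ s, F k y) x = ∑ k ∈ s, pderiv' i (F k) x := by
  simp only [pderiv', fderiv_fun_sum hF, _root_.sum_apply]

lemma contDiffAt_pderiv' {m n : WithTop ℕ∞} (hf : ContDiffAt ℝ n f x) (hmn : m + 1 ≤ n)
    (i : Fin d) : ContDiffAt ℝ m (pderiv' i f) x :=
  (hf.fderiv_right hmn).clm_apply contDiffAt_const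

lemma differentiableAt_laplacian' (hf : ContDiffAt ℝ 3 f x) :
    DifferentiableAt ℝ (laplacian' f) x :=
  DifferentiableAt.fun_sum fun i _ =>
    (contDiffAt_pderiv' (contDiffAt_pderiv' hf (m := 2) le_rfl i) le_rfl i).differentiableAt
      one_ne_zero

lemma pderiv'_pderiv' (hf : DifferentiableAt ℝ (fderiv ℝ f) x) (i j : Fin d) :
    pderiv' i (pderiv' j f) x
      = fderiv ℝ (fderiv ℝ f) x (EuclideanSpace.single i 1) (EuclideanSpace.single j 1) := by
  unfold pderiv'
  rw [fderiv_clm_apply hf (differentiableAt_const _)]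
  simp

lemma pderiv'_comm (hf : ContDiffAt ℝ 2 f x) (i j : Fin d) :
    pderiv' i (pderiv' j f) x = pderiv' j (pderiv' i f) x := by
  have hf' := (hf.fderiv_right one_add_one_eq_two.le).differentiableAt one_ne_zero
  rw [pderiv'_pderiv' hf', pderiv'_pderiv' hf', hf.isSymmSndFDerivAt (by simp)]

lemma pderiv'_laplacian' (hf : ContDiffAt ℝ 3 f x) (i : Fin d) :
    pderiv' i (laplacian' f) x = ∑ j, pderiv' j (pderiv' i (pderiv' j f)) x := by
  have hf' : ∀ j, ContDiffAt ℝ 2 (pderiv' j f) x := fun j => contDiffAt_pderiv' hf le_rfl j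
  refine (pderiv'_sum (fun j _ =>
    (contDiffAt_pderiv' (hf' j) le_rfl j).differentiableAt one_ne_zero) i).trans ?_
  exact sum_congr rfl fun j _ => pderiv'_comm (hf' j) i j

lemma fderiv_eq_zero_of_forall_pderiv'_eq_zero (h : ∀ i, pderiv' i f x = 0) :
    fderiv ℝ f x = 0 :=
  ContinuousLinearMap.coe_injective <|
    (EuclideanSpace.basisFun (Fin d) ℝ).toBasis.ext fun i => by simpa [pderiv'] using h i

lemma sum_pderiv'_potentialStress {φ : EuclideanSpace ℝ (Fin d) → ℝ} (hφ : ContDiffAt ℝ 3 φ x)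
    (lam mu : ℝ) (i : Fin d) :
    ∑ j, pderiv' j (fun y => potentialStress lam mu φ y i j) x
      = (lam + 2 * mu) * pderiv' i (laplacian' φ) x := by
  have hΔ := differentiableAt_laplacian' hφ
  have hH : ∀ j, DifferentiableAt ℝ (pderiv' i (pderiv' j φ)) x := fun j =>
    (contDiffAt_pderiv' (contDiffAt_pderiv' hφ (m := 2) le_rfl j) le_rfl i).differentiableAt
      one_ne_zero
  calc ∑ j, pderiv' j (fun y => potentialStress lam mu φ y i j) x
      = ∑ j, pderiv' j (fun y => lam * (1 : Matrix (Fin d) (Fin d) ℝ) i j * laplacian' φ y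
          + 2 * mu * pderiv' i (pderiv' j φ) y) x := by
        refine sum_congr rfl fun j _ => congrArg (pderiv' j · x) (funext fun y => ?_)
        simp only [potentialStress, hessian, Matrix.add_apply, Matrix.smul_apply, smul_eq_mul]
        ring
    _ = ∑ j, (lam * (1 : Matrix (Fin d) (Fin d) ℝ) i j * pderiv' j (laplacian' φ) x
          + 2 * mu * pderiv' j (pderiv' i (pderiv' j φ)) x) := by
        refine sum_congr rfl fun j _ => ?_
        rw [pderiv'_add (hΔ.const_mul _) ((hH j).const_mul _), pderiv'_const_mul hΔ,
          pderiv'_const_mul (hH j)]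
    _ = (lam + 2 * mu) * pderiv' i (laplacian' φ) x := by
        rw [sum_add_distrib, ← mul_sum, ← pderiv'_laplacian' hφ]
        simp only [Matrix.one_apply, mul_ite, mul_one, mul_zero, ite_mul, zero_mul, sum_ite_eq,
          mem_univ, ↓reduceIte]
        ring

end

theorem constant_of_divergence_free_stress {d : ℕ}
    (U : Set (EuclideanSpace ℝ (Fin d)))
    (hU : IsOpen U) (hUconn : IsConnected U)
    (φ : EuclideanSpace ℝ (Fin d) → ℝ)
    (hφ : ContDiffOn ℝ 3 φ U) (lam mu : ℝ)
    (hdivfree : ∀ x ∈ U, ∀ i : Fin d,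
      (∑ j, pderiv' j (fun y => potentialStress lam mu φ y i j) x) = 0) :
    ∀ x ∈ U, ∀ y ∈ U,
      (lam + 2 * mu) * laplacian' φ x = (lam + 2 * mu) * laplacian' φ y := by
  intro x hx y hy
  have hφ3 : ∀ z ∈ U, ContDiffAt ℝ 3 φ z := fun z hz => hφ.contDiffAt (hU.mem_nhds hz)
  refine hU.is_const_of_fderiv_eq_zero hUconn.isPreconnected (fun z hz =>
    ((differentiableAt_laplacian' (hφ3 z hz)).const_mul _).differentiableWithinAt)
    (fun z hz => ?_) hx hy
  refine fderiv_eq_zero_of_forall_pderiv'_eq_zero fun i => ?_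
  rw [pderiv'_const_mul (differentiableAt_laplacian' (hφ3 z hz)),
    ← sum_pderiv'_potentialStress (hφ3 z hz)]
  exact hdivfree z hz i
end

section
/- Let U ⊆ ℂ be open, let λ, μ ∈ ℝ with μ ≠ 0 and λ + μ ≠ 0, set κ = (λ + 3μ)/(λ + μ), and let φ, ψ : U → ℂ be holomorphic. Define w : U → ℂ by 2μ·w(z) = κ·φ(z) − z·conj(φ′(z)) − conj(ψ(z)), identified with the planar vector field (Re w, Im w). Then w satisfies the Lamé equations on U: −(λ+μ)∇(∇·w) − μΔw = 0 at every point of U. -/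
open Complex

/-- Partial derivative in the `x`-direction of a scalar function on `ℝ² = ℂ`. -/
noncomputable def pdx (f : ℂ → ℝ) (z : ℂ) : ℝ := fderiv ℝ f z 1

/-- Partial derivative in the `y`-direction of a scalar function on `ℝ² = ℂ`. -/
noncomputable def pdy (f : ℂ → ℝ) (z : ℂ) : ℝ := fderiv ℝ f z Complex.I

/-- The divergence `∇·w = ∂(Re w)/∂x + ∂(Im w)/∂y` of the planar vector field
`(Re w, Im w)` associated to `w : ℂ → ℂ`. -/
noncomputable def div2 (w : ℂ → ℂ) (z : ℂ) : ℝ :=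
  pdx (fun y => (w y).re) z + pdy (fun y => (w y).im) z

/-- The Laplacian `Δf = ∂²f/∂x² + ∂²f/∂y²` of a scalar function on `ℝ² = ℂ`. -/
noncomputable def lap2 (f : ℂ → ℝ) (z : ℂ) : ℝ :=
  pdx (pdx f) z + pdy (pdy f) z

/-- The gradient `(∂f/∂x, ∂f/∂y)` of a scalar function on `ℝ² = ℂ`, as a complex number. -/
noncomputable def grad2 (f : ℂ → ℝ) (z : ℂ) : ℂ :=
  ⟨pdx f z, pdy f z⟩

/-- The componentwise Laplacian of the planar vector field `(Re w, Im w)`. -/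
noncomputable def vecLap2 (w : ℂ → ℂ) (z : ℂ) : ℂ :=
  ⟨lap2 (fun y => (w y).re) z, lap2 (fun y => (w y).im) z⟩

/-- The Lamé operator `L w = −(λ+μ)∇(∇·w) − μΔw` acting on the planar vector field
`(Re w, Im w)`. -/
noncomputable def lame2 (lam mu : ℝ) (w : ℂ → ℂ) (z : ℂ) : ℂ :=
  (-(lam + mu)) • grad2 (div2 w) z + (-mu) • vecLap2 w z

/-!
Write `2μ w = κ φ - z conj φ' - conj ψ` as `w = A + z conj B + conj C` with holomorphic
`A = κφ/2μ`, `B = -φ'/2μ`, `C = -ψ/2μ`. Fields of this shape are closed under real directional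
derivatives: `∂ᵥ (A + z conj B + conj C) = vA' + z conj (vB') + conj (conj v B + vC')`.
Two such steps give `Δw = 4 conj B'`, and one gives `∇·w = 2 Re (A' + B)`, the real part of a
holomorphic function, whose gradient is `2 conj (A'' + B')`. Hence
`L w = -2 conj ((λ+μ)(A'' + B') + 2μ B')`, and `(κ - 1)(λ + μ) = 2μ` makes the bracket vanish.
-/

open ComplexConjugate Topology

noncomputable def kmField (A B C : ℂ → ℂ) (z : ℂ) : ℂ := A z + z * conj (B z) + conj (C z)

theorem HasDerivAt.hasFDerivAt_conj {f : ℂ → ℂ} {f' z : ℂ} (h : HasDerivAt f f' z) :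
    HasFDerivAt (fun y => conj (f y)) (conj f' • conjCLE.toContinuousLinearMap) z :=
  (conjCLE.hasFDerivAt.comp z h.complexToReal_fderiv).congr_fderiv <| by ext; simp

theorem hasFDerivAt_kmField {A B C : ℂ → ℂ} {a b c z : ℂ} (hA : HasDerivAt A a z)
    (hB : HasDerivAt B b z) (hC : HasDerivAt C c z) :
    HasFDerivAt (kmField A B C) ((a + conj (B z)) • (1 : ℂ →L[ℝ] ℂ)
      + (z * conj b + conj c) • conjCLE.toContinuousLinearMap) z := by
  have h := (hA.complexToReal_fderiv.add ((hasFDerivAt_id z).mul hB.hasFDerivAt_conj)).add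
    hC.hasFDerivAt_conj
  refine h.congr_fderiv ?_
  ext v
  simp only [id_eq, add_apply, smul_apply, one_apply_eq_self, smul_eq_mul,
    ContinuousLinearEquiv.coe_coe, ContinuousAlgEquiv.coeCLE_apply, conjCAE_apply,
    ContinuousLinearMap.id_apply]
  ring

theorem fderiv_comp_kmField_apply {A B C : ℂ → ℂ} {z : ℂ} (hA : DifferentiableAt ℂ A z)
    (hB : DifferentiableAt ℂ B z) (hC : DifferentiableAt ℂ C z) (L : ℂ →L[ℝ] ℝ) (v : ℂ) :
    fderiv ℝ (fun y => L (kmField A B C y)) z v =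
      L (kmField (v • deriv A) (v • deriv B) (conj v • B + v • deriv C) z) := by
  rw [HasFDerivAt.fderiv (f := fun y => L (kmField A B C y)) (L.hasFDerivAt.comp z
    (hasFDerivAt_kmField hA.hasDerivAt hB.hasDerivAt hC.hasDerivAt))]
  simp only [kmField, ContinuousLinearMap.comp_apply]
  congr 1
  simp only [add_apply, smul_apply, one_apply_eq_self, smul_eq_mul, ContinuousLinearEquiv.coe_coe,
    ContinuousAlgEquiv.coeCLE_apply, conjCAE_apply, Pi.smul_apply, Pi.add_apply, map_mul,
    map_add, conj_conj]
  ring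

theorem Filter.EventuallyEq.pdx {f g : ℂ → ℝ} {z : ℂ} (h : f =ᶠ[𝓝 z] g) :
    _root_.pdx f =ᶠ[𝓝 z] _root_.pdx g :=
  h.fderiv.mono fun _ hy => DFunLike.congr_fun hy 1

theorem Filter.EventuallyEq.pdy {f g : ℂ → ℝ} {z : ℂ} (h : f =ᶠ[𝓝 z] g) :
    _root_.pdy f =ᶠ[𝓝 z] _root_.pdy g :=
  h.fderiv.mono fun _ hy => DFunLike.congr_fun hy I

theorem Filter.EventuallyEq.grad2_eq {f g : ℂ → ℝ} {z : ℂ} (h : f =ᶠ[𝓝 z] g) :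
    grad2 f z = grad2 g z := by
  simp only [grad2, h.pdx.eq_of_nhds, h.pdy.eq_of_nhds]

theorem Filter.EventuallyEq.lame2_eq {w W : ℂ → ℂ} {z : ℂ} (h : w =ᶠ[𝓝 z] W) (lam mu : ℝ) :
    lame2 lam mu w z = lame2 lam mu W z := by
  have hre : (fun y => (w y).re) =ᶠ[𝓝 z] fun y => (W y).re := h.fun_comp re
  have him : (fun y => (w y).im) =ᶠ[𝓝 z] fun y => (W y).im := h.fun_comp im
  have hdiv : div2 w =ᶠ[𝓝 z] div2 W := hre.pdx.add him.pdy
  simp only [lame2, vecLap2, lap2, hdiv.grad2_eq, hre.pdx.pdx.eq_of_nhds, hre.pdy.pdy.eq_of_nhds,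
    him.pdx.pdx.eq_of_nhds, him.pdy.pdy.eq_of_nhds]

theorem grad2_re_of_differentiableAt {h : ℂ → ℂ} {z : ℂ} (hh : DifferentiableAt ℂ h z) :
    grad2 (fun y => (h y).re) z = conj (deriv h z) := by
  have hd := HasFDerivAt.fderiv (f := fun y => (h y).re)
    (reCLM.hasFDerivAt.comp z hh.hasDerivAt.complexToReal_fderiv)
  apply Complex.ext <;> simp [grad2, pdx, pdy, hd]

section Holomorphic

variable {U : Set ℂ} {A B C : ℂ → ℂ} {z : ℂ}

theorem fderiv_fderiv_comp_kmField_apply (hU : IsOpen U) (hA : DifferentiableOn ℂ A U)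
    (hB : DifferentiableOn ℂ B U) (hC : DifferentiableOn ℂ C U) (hz : z ∈ U)
    (L : ℂ →L[ℝ] ℝ) (u v : ℂ) :
    fderiv ℝ (fun y => fderiv ℝ (fun t => L (kmField A B C t)) y v) z u =
      L (kmField (u • v • deriv (deriv A)) (u • v • deriv (deriv B))
        ((conj u * v + u * conj v) • deriv B + u • v • deriv (deriv C)) z) := by
  have hd {f : ℂ → ℂ} (hf : DifferentiableOn ℂ f U) : ∀ y ∈ U, DifferentiableAt ℂ f y :=
    fun y hy => hf.differentiableAt (hU.mem_nhds hy)
  have hd' {f : ℂ → ℂ} (hf : DifferentiableOn ℂ f U) : ∀ y ∈ U, DifferentiableAt ℂ (deriv f) y :=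
    hd (hf.deriv hU)
  have hloc : (fun y => fderiv ℝ (fun t => L (kmField A B C t)) y v) =ᶠ[𝓝 z]
      fun y => L (kmField (v • deriv A) (v • deriv B) (conj v • B + v • deriv C) y) := by
    filter_upwards [hU.mem_nhds hz] with y hy
    exact fderiv_comp_kmField_apply (hd hA y hy) (hd hB y hy) (hd hC y hy) L v
  rw [hloc.fderiv_eq, fderiv_comp_kmField_apply ((hd' hA z hz).const_smul v)
    ((hd' hB z hz).const_smul v) (((hd hB z hz).const_smul _).add ((hd' hC z hz).const_smul v))]
  simp only [kmField, Pi.add_apply, Pi.smul_apply, deriv_const_smul _ (hd' hA z hz),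
    deriv_const_smul _ (hd' hB z hz), deriv_add ((hd hB z hz).const_smul _)
      ((hd' hC z hz).const_smul v), deriv_const_smul _ (hd hB z hz),
    deriv_const_smul _ (hd' hC z hz), smul_eq_mul]
  congr 3
  ring

theorem div2_kmField (hA : DifferentiableAt ℂ A z) (hB : DifferentiableAt ℂ B z)
    (hC : DifferentiableAt ℂ C z) : div2 (kmField A B C) z = (2 * (deriv A z + B z)).re := by
  have hre := fderiv_comp_kmField_apply hA hB hC reCLM 1
  have him := fderiv_comp_kmField_apply hA hB hC imCLM I
  simp only [reCLM_apply, imCLM_apply] at hre him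
  rw [div2, pdx, pdy, hre, him]
  simp only [kmField, Pi.add_apply, Pi.smul_apply, smul_eq_mul, one_mul, map_one, map_add,
    map_mul, conj_I, add_re, add_im, mul_re, mul_im, neg_re, neg_im, conj_re, conj_im, I_re, I_im,
    re_ofNat, im_ofNat]
  ring

theorem lap2_comp_kmField (hU : IsOpen U) (hA : DifferentiableOn ℂ A U)
    (hB : DifferentiableOn ℂ B U) (hC : DifferentiableOn ℂ C U) (hz : z ∈ U) (L : ℂ →L[ℝ] ℝ) :
    lap2 (fun y => L (kmField A B C y)) z = L (conj (4 * deriv B z)) := by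
  unfold lap2 pdx pdy
  rw [fderiv_fderiv_comp_kmField_apply hU hA hB hC hz,
    fderiv_fderiv_comp_kmField_apply hU hA hB hC hz, ← map_add]
  congr 1
  simp only [kmField, Pi.add_apply, Pi.smul_apply, smul_eq_mul, map_add, map_mul, map_neg,
    map_one, conj_I, map_ofNat]
  linear_combination (deriv (deriv A) z + z * conj (deriv (deriv B) z)
    + conj (deriv (deriv C) z) - 2 * conj (deriv B z)) * I_sq

theorem vecLap2_kmField (hU : IsOpen U) (hA : DifferentiableOn ℂ A U)
    (hB : DifferentiableOn ℂ B U) (hC : DifferentiableOn ℂ C U) (hz : z ∈ U) :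
    vecLap2 (kmField A B C) z = conj (4 * deriv B z) :=
  Complex.ext (lap2_comp_kmField hU hA hB hC hz reCLM) (lap2_comp_kmField hU hA hB hC hz imCLM)

theorem grad2_div2_kmField (hU : IsOpen U) (hA : DifferentiableOn ℂ A U)
    (hB : DifferentiableOn ℂ B U) (hC : DifferentiableOn ℂ C U) (hz : z ∈ U) :
    grad2 (div2 (kmField A B C)) z = conj (2 * (deriv (deriv A) z + deriv B z)) := by
  have hd {f : ℂ → ℂ} (hf : DifferentiableOn ℂ f U) : ∀ y ∈ U, DifferentiableAt ℂ f y :=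
    fun y hy => hf.differentiableAt (hU.mem_nhds hy)
  have hloc : div2 (kmField A B C) =ᶠ[𝓝 z] fun y => (2 * (deriv A y + B y)).re := by
    filter_upwards [hU.mem_nhds hz] with y hy
    exact div2_kmField (hd hA y hy) (hd hB y hy) (hd hC y hy)
  have hA' := hd (hA.deriv hU) z hz
  have hB' := hd hB z hz
  rw [hloc.grad2_eq, grad2_re_of_differentiableAt (by fun_prop)]
  simp only [deriv_const_mul_field', deriv_fun_add hA' hB']

theorem lame2_kmField (hU : IsOpen U) (hA : DifferentiableOn ℂ A U)
    (hB : DifferentiableOn ℂ B U) (hC : DifferentiableOn ℂ C U) (hz : z ∈ U) (lam mu : ℝ) :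
    lame2 lam mu (kmField A B C) z = (-(lam + mu)) • conj (2 * (deriv (deriv A) z + deriv B z))
      + (-mu) • conj (4 * deriv B z) := by
  rw [lame2, grad2_div2_kmField hU hA hB hC hz, vecLap2_kmField hU hA hB hC hz]

end Holomorphic

theorem kolosov_muskhelishvili_solution (U : Set ℂ) (hU : IsOpen U)
    (lam mu : ℝ) (hmu : mu ≠ 0) (hlm : lam + mu ≠ 0)
    (φ ψ : ℂ → ℂ) (hφ : DifferentiableOn ℂ φ U) (hψ : DifferentiableOn ℂ ψ U)
    (κ : ℝ) (hκ : κ = (lam + 3 * mu) / (lam + mu))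
    (w : ℂ → ℂ)
    (hw : ∀ z ∈ U, (2 * mu : ℂ) * w z =
      (κ : ℂ) * φ z - z * (starRingEnd ℂ) (deriv φ z) - (starRingEnd ℂ) (ψ z)) :
    ∀ z ∈ U, lame2 lam mu w z = 0 := by
  intro z hz
  have hmu' : (mu : ℂ) ≠ 0 := ofReal_ne_zero.mpr hmu
  have h2mu : (2 * mu : ℂ) ≠ 0 := mul_ne_zero two_ne_zero hmu'
  set c : ℂ := (2 * mu : ℂ)⁻¹ with hc
  have hc_conj : conj c = c := by simp [hc, map_ofNat]
  have hkm : w =ᶠ[𝓝 z] kmField (fun y => c * κ * φ y) (fun y => -c * deriv φ y)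
      (fun y => -c * ψ y) := by
    filter_upwards [hU.mem_nhds hz] with y hy
    simp only [kmField, map_mul, map_neg, hc_conj]
    apply mul_left_cancel₀ h2mu
    rw [hw y hy, hc]
    field_simp
    ring
  have hκ' : ((κ - 1) * (lam + mu) : ℂ) = 2 * mu := by
    have : (κ - 1) * (lam + mu) = 2 * mu := by rw [hκ]; field_simp; ring
    exact_mod_cast this
  rw [hkm.lame2_eq, lame2_kmField hU (hφ.const_mul _) ((hφ.deriv hU).const_mul _)
    (hψ.const_mul _) hz]
  simp only [deriv_const_mul_field', Complex.real_smul, map_mul, map_add, map_neg, hc_conj,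
    conj_ofReal, map_ofNat]
  push_cast
  linear_combination (-2 * c * conj (deriv (deriv φ) z)) * hκ'
end
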